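/- arXiv:2507.04798 — 4 statements merged into one kernel-verified Lean document; each statement's English description precedes it below -/
import Mathlib

section
/- Let X and Y be real Banach spaces and let ζ : X → Y be a Fredholm operator (a continuous linear map with finite-dimensional kernel and closed range of finite codimension). Let E be a finite-dimensional subspace of Y such that Y = range(ζ) + E and range(ζ) ∩ E = {0}. Then there exists a constant c > 0 (depending on E and ζ) such that for every finite-dimensional subspace E' of Y with sup over the unit sphere of E of dist(x, E') ≤ c, one has Y = range(ζ) + E'. -/
/-!
Since `R = range ζ` is closed and `E` is a finite-dimensional complement of it, the projection
`P : Y → E` along `R` is continuous. If every unit vector of `E` lies within `c` of `E'`, where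
`c ‖P‖ < 1`, then `P(E') = E`: otherwise Riesz's lemma yields a unit vector `x ∈ E` at distance
more than `c ‖P‖` from `P(E')`, whereas `x = P x` lies within `‖P‖ dist(x, E') ≤ c ‖P‖` of it.
Finally `P(E') = E` says that every vector of `Y` differs from a vector of `E'` by one of
`ker P = R`.
-/

section

open Metric Submodule

theorem LipschitzWith.infDist_image_le {α β : Type*} [PseudoMetricSpace α]
    [PseudoMetricSpace β] {K : NNReal} {f : α → β} (hf : LipschitzWith K f) (x : α) (s : Set α) :
    infDist (f x) (f '' s) ≤ K * infDist x s := by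
  rcases s.eq_empty_or_nonempty with rfl | hs
  · simp
  have : Nonempty s := hs.to_subtype
  rw [infDist_eq_iInf (x := x) (s := s), Real.mul_iInf_of_nonneg K.coe_nonneg]
  exact le_ciInf fun y ↦ (infDist_le_dist_of_mem (Set.mem_image_of_mem f y.2)).trans
    (hf.dist_le_mul x y)

variable {Y : Type*} [NormedAddCommGroup Y] [NormedSpace ℝ Y]

theorem Submodule.map_eq_top_of_forall_infDist_le {E : Submodule ℝ Y} [FiniteDimensional ℝ E]
    (P : Y →L[ℝ] E) (hP : ∀ x : E, P x = x) {c : ℝ} (hc : c * ‖P‖ < 1) (E' : Submodule ℝ Y)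
    (hE' : ∀ x ∈ E, ‖x‖ = 1 → infDist x (E' : Set Y) ≤ c) :
    E'.map (P : Y →ₗ[ℝ] E) = ⊤ := by
  set F := E'.map (P : Y →ₗ[ℝ] E)
  by_contra hF
  obtain ⟨r, hcr, hr⟩ := exists_between hc
  obtain ⟨x, -, hx, hxF⟩ := riesz_lemma_of_lt_one (𝕜 := ℝ) F.closed_of_finiteDimensional
    (SetLike.exists_not_mem_of_ne_top F hF rfl) hr
  have hx_far : r ≤ infDist x (F : Set E) :=
    (le_infDist ⟨0, F.zero_mem⟩).2 fun y hy ↦ by simpa [dist_eq_norm] using hxF y hy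
  have hx_near : infDist x (F : Set E) ≤ ‖P‖ * infDist (x : Y) (E' : Set Y) := by
    simpa [hP, F] using P.lipschitz.infDist_image_le (x : Y) E'
  refine hcr.not_ge ?_
  calc r ≤ ‖P‖ * infDist (x : Y) (E' : Set Y) := hx_far.trans hx_near
    _ ≤ ‖P‖ * c := by gcongr; exact hE' x x.2 (by simpa using hx)
    _ = c * ‖P‖ := mul_comm _ _

theorem Submodule.IsCompl.exists_pos_forall_infDist_le_imp_sup_eq_top {R E : Submodule ℝ Y}
    (h : IsCompl R E) (hR : IsClosed (R : Set Y)) [FiniteDimensional ℝ E] :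
    ∃ c > 0, ∀ E' : Submodule ℝ Y,
      (∀ x ∈ E, ‖x‖ = 1 → infDist x (E' : Set Y) ≤ c) → R ⊔ E' = ⊤ := by
  have hRE := (h.isTopCompl_of_isClosed_of_finiteDimensional hR).symm
  set P := E.projectionOntoL R hRE
  refine ⟨(‖P‖ + 1)⁻¹, by positivity, fun E' hE' ↦ ?_⟩
  have hmap := E.map_eq_top_of_forall_infDist_le P (projectionOntoL_apply_left hRE)
    (by rw [inv_mul_lt_one₀ (by positivity)]; linarith) E' hE'
  have hker : LinearMap.ker (P : Y →ₗ[ℝ] E) = R := ker_projectionOntoL hRE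
  rw [sup_comm, ← hker, ← comap_map_eq, hmap, comap_top]

end

theorem stmt_0_general
    {X Y : Type*} [NormedAddCommGroup X] [NormedSpace ℝ X]
    [NormedAddCommGroup Y] [NormedSpace ℝ Y]
    (ζ : X →L[ℝ] Y)
    (hclosed : IsClosed (LinearMap.range (ζ : X →ₗ[ℝ] Y) : Set Y))
    (E : Submodule ℝ Y) (hE : FiniteDimensional ℝ E)
    (hsum : LinearMap.range (ζ : X →ₗ[ℝ] Y) ⊔ E = ⊤)
    (hint : LinearMap.range (ζ : X →ₗ[ℝ] Y) ⊓ E = ⊥) :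
    ∃ c > 0, ∀ E' : Submodule ℝ Y, FiniteDimensional ℝ E' →
      (∀ x ∈ E, ‖x‖ = 1 → Metric.infDist x (E' : Set Y) ≤ c) →
      LinearMap.range (ζ : X →ₗ[ℝ] Y) ⊔ E' = ⊤ := by
  obtain ⟨c, hc, hsup⟩ := Submodule.IsCompl.exists_pos_forall_infDist_le_imp_sup_eq_top
    ⟨disjoint_iff.mpr hint, codisjoint_iff.mpr hsum⟩ hclosed
  exact ⟨c, hc, fun E' _ hE' ↦ hsup E' hE'⟩

/-- **Lemma 3.6.** Let `X`, `Y` be real Banach spaces, `ζ : X → Y` a Fredholm operator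
(continuous linear, finite-dimensional kernel, closed range of finite codimension),
and `E` a finite-dimensional subspace of `Y` with `Y = range ζ + E` and
`range ζ ∩ E = {0}`. Then there is `c > 0` such that every finite-dimensional subspace
`E'` of `Y` with `dist(x, E') ≤ c` for all `x` in the unit sphere of `E` satisfies
`Y = range ζ + E'`. -/
theorem stmt_0
    {X Y : Type*} [NormedAddCommGroup X] [NormedSpace ℝ X] [CompleteSpace X]
    [NormedAddCommGroup Y] [NormedSpace ℝ Y] [CompleteSpace Y]
    (ζ : X →L[ℝ] Y)
    (hker : FiniteDimensional ℝ (LinearMap.ker (ζ : X →ₗ[ℝ] Y)))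
    (hclosed : IsClosed (LinearMap.range (ζ : X →ₗ[ℝ] Y) : Set Y))
    (hcoker : FiniteDimensional ℝ (Y ⧸ LinearMap.range (ζ : X →ₗ[ℝ] Y)))
    (E : Submodule ℝ Y) (hE : FiniteDimensional ℝ E)
    (hsum : LinearMap.range (ζ : X →ₗ[ℝ] Y) ⊔ E = ⊤)
    (hint : LinearMap.range (ζ : X →ₗ[ℝ] Y) ⊓ E = ⊥) :
    ∃ c > 0, ∀ E' : Submodule ℝ Y, FiniteDimensional ℝ E' →
      (∀ x ∈ E, ‖x‖ = 1 → Metric.infDist x (E' : Set Y) ≤ c) →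
      LinearMap.range (ζ : X →ₗ[ℝ] Y) ⊔ E' = ⊤ :=
  stmt_0_general ζ hclosed E hE hsum hint
end

section
/- Let X and Y be real Banach spaces and let ζ : X → Y be a continuous linear map with closed range. Let E be a finite-dimensional subspace of Y such that Y = range(ζ) + E and range(ζ) ∩ E = {0}. If E' is a finite-dimensional subspace of Y satisfying sup_{x ∈ E, ‖x‖ = 1} dist(x, E') < inf_{x ∈ E, ‖x‖ = 1} dist(x, range(ζ)), then Y = range(ζ) + E'. -/
/-!
Let `P : Y → E` be the projection along `range ζ` and `c` the infimum of `dist(x, range ζ)` over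
the unit sphere of `E`. By homogeneity `c‖x‖ ≤ dist(x, range ζ)` on `E`, whence `c‖P z‖ ≤ ‖z‖`.
So every unit vector of `E` lies within `s / c < 1` of the subspace `P E'` of `E`, where `s` is the
supremum in the hypothesis, and Riesz's lemma forces `P E' = E`, i.e. `range ζ + E' = Y`.
-/

open Metric

theorem Submodule.eq_top_of_forall_norm_eq_one_infDist_le {V : Type*} [NormedAddCommGroup V]
    [NormedSpace ℝ V] {F : Submodule ℝ V} (hF : IsClosed (F : Set V)) {r : ℝ} (hr : r < 1)
    (h : ∀ v : V, ‖v‖ = 1 → infDist v F ≤ r) : F = ⊤ := by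
  by_contra! hne
  obtain ⟨x, hxF, hx⟩ := riesz_lemma hF (SetLike.exists_not_mem_of_ne_top F hne)
    (show (r + 1) / 2 < 1 by linarith)
  have hx0 : x ≠ 0 := fun h => hxF (h ▸ F.zero_mem)
  have hxpos : 0 < ‖x‖ := norm_pos_iff.mpr hx0
  have hfar : (r + 1) / 2 ≤ infDist (‖x‖⁻¹ • x) F := by
    refine (le_infDist F.nonempty).2 fun y hy => ?_
    have := hx (‖x‖ • y) (F.smul_mem _ hy)
    have hscale : ‖x‖⁻¹ • x - y = ‖x‖⁻¹ • (x - ‖x‖ • y) := by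
      rw [smul_sub, smul_smul, inv_mul_cancel₀ hxpos.ne', one_smul]
    rwa [dist_eq_norm, hscale, norm_smul, norm_inv, norm_norm, le_inv_mul_iff₀ hxpos, mul_comm]
  have hunit : ‖‖x‖⁻¹ • x‖ = 1 := by rw [norm_smul, norm_inv, norm_norm, inv_mul_cancel₀ hxpos.ne']
  linarith [h _ hunit]

theorem Submodule.mul_norm_le_infDist {Y : Type*} [NormedAddCommGroup Y] [NormedSpace ℝ Y]
    {p q : Submodule ℝ Y} {c : ℝ} (hc : ∀ x ∈ p, ‖x‖ = 1 → c ≤ infDist x q) {x : Y} (hx : x ∈ p) :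
    c * ‖x‖ ≤ infDist x q := by
  rcases eq_or_ne x 0 with rfl | hx0
  · simpa using infDist_nonneg
  have hxpos : 0 < ‖x‖ := norm_pos_iff.mpr hx0
  refine (le_infDist q.nonempty).2 fun y hy => ?_
  have := (hc _ (p.smul_mem ‖x‖⁻¹ hx) (norm_smul_inv_norm hx0)).trans
    (infDist_le_dist_of_mem (q.smul_mem ‖x‖⁻¹ hy))
  rwa [dist_eq_norm, ← smul_sub, norm_smul, norm_inv, norm_norm, le_inv_mul_iff₀ hxpos,
    ← dist_eq_norm, mul_comm] at this

theorem Submodule.mul_norm_projectionOnto_le {Y : Type*} [NormedAddCommGroup Y] [NormedSpace ℝ Y]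
    {p q : Submodule ℝ Y} (h : IsCompl p q) {c : ℝ} (hc : ∀ x ∈ p, ‖x‖ = 1 → c ≤ infDist x q)
    (z : Y) : c * ‖p.projectionOnto q h z‖ ≤ ‖z‖ :=
  calc c * ‖p.projectionOnto q h z‖ ≤ infDist (p.projection q h z : Y) q :=
        p.mul_norm_le_infDist hc (p.projection_apply_mem h z)
    _ ≤ dist (p.projection q h z) (p.projection q h z - z) :=
        infDist_le_dist_of_mem (by simpa using q.neg_mem (p.sub_projection_mem h z))
    _ = ‖z‖ := by rw [dist_eq_norm, sub_sub_cancel]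

theorem Submodule.mul_infDist_map_le {Y V : Type*} [NormedAddCommGroup Y] [NormedSpace ℝ Y]
    [NormedAddCommGroup V] [NormedSpace ℝ V] {f : Y →ₗ[ℝ] V} {c : ℝ} (hc : 0 ≤ c)
    (hf : ∀ z, c * ‖f z‖ ≤ ‖z‖) (E' : Submodule ℝ Y) (y : Y) :
    c * infDist (f y) (E'.map f) ≤ infDist y E' := by
  refine (le_infDist E'.nonempty).2 fun e he => ?_
  calc c * infDist (f y) (E'.map f) ≤ c * dist (f y) (f e) :=
        mul_le_mul_of_nonneg_left (infDist_le_dist_of_mem ⟨e, he, rfl⟩) hc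
    _ ≤ dist y e := by simpa only [dist_eq_norm, map_sub] using hf (y - e)

theorem Submodule.sup_eq_top_of_projectionOnto_map_eq_top {Y : Type*} [AddCommGroup Y]
    [Module ℝ Y] {p q : Submodule ℝ Y} (h : IsCompl p q) {E' : Submodule ℝ Y}
    (hE' : E'.map (p.projectionOnto q h) = ⊤) : q ⊔ E' = ⊤ := by
  rwa [LinearMap.map_eq_top_iff (p.range_projectionOnto h), Submodule.ker_projectionOnto,
    sup_comm] at hE'

theorem Submodule.sup_eq_top_of_infDist_le {Y : Type*} [NormedAddCommGroup Y] [NormedSpace ℝ Y]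
    {p q : Submodule ℝ Y} (h : IsCompl p q) [FiniteDimensional ℝ p] (E' : Submodule ℝ Y)
    {s c : ℝ} (hsc : s < c) (hc0 : 0 < c) (hs : ∀ x ∈ p, ‖x‖ = 1 → infDist x E' ≤ s)
    (hc : ∀ x ∈ p, ‖x‖ = 1 → c ≤ infDist x q) : q ⊔ E' = ⊤ := by
  refine Submodule.sup_eq_top_of_projectionOnto_map_eq_top h <|
    Submodule.eq_top_of_forall_norm_eq_one_infDist_le (Submodule.closed_of_finiteDimensional _)
      ((div_lt_one hc0).2 hsc) fun v hv => ?_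
  rw [le_div_iff₀ hc0, mul_comm]
  calc c * infDist v (E'.map (p.projectionOnto q h))
      = c * infDist (p.projectionOnto q h v) (E'.map (p.projectionOnto q h)) := by
        rw [Submodule.projectionOnto_apply_left]
    _ ≤ infDist (v : Y) E' :=
        Submodule.mul_infDist_map_le hc0.le (Submodule.mul_norm_projectionOnto_le h hc) E' v
    _ ≤ s := hs v v.2 hv

theorem stmt_1_general
    {X Y : Type*} [NormedAddCommGroup X] [NormedSpace ℝ X]
    [NormedAddCommGroup Y] [NormedSpace ℝ Y]
    (ζ : X →L[ℝ] Y)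
    (E : Submodule ℝ Y) (hE : FiniteDimensional ℝ E)
    (hsum : LinearMap.range (ζ : X →ₗ[ℝ] Y) ⊔ E = ⊤)
    (hint : LinearMap.range (ζ : X →ₗ[ℝ] Y) ⊓ E = ⊥)
    (E' : Submodule ℝ Y)
    (hlt : (⨆ x : {x : Y // x ∈ E ∧ ‖x‖ = 1}, Metric.infDist (x : Y) (E' : Set Y)) <
      ⨅ x : {x : Y // x ∈ E ∧ ‖x‖ = 1},
        Metric.infDist (x : Y) (LinearMap.range (ζ : X →ₗ[ℝ] Y) : Set Y)) :
    LinearMap.range (ζ : X →ₗ[ℝ] Y) ⊔ E' = ⊤ := by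
  have hcompl : IsCompl E (LinearMap.range (ζ : X →ₗ[ℝ] Y)) :=
    IsCompl.symm ⟨disjoint_iff.mpr hint, codisjoint_iff.mpr hsum⟩
  have hbdd : BddAbove (Set.range fun x : {x : Y // x ∈ E ∧ ‖x‖ = 1} => infDist (x : Y) E') :=
    ⟨1, Set.forall_mem_range.2 fun x =>
      (infDist_le_dist_of_mem E'.zero_mem).trans_eq (by rw [dist_zero_right, x.2.2])⟩
  have hbdd' : BddBelow (Set.range fun x : {x : Y // x ∈ E ∧ ‖x‖ = 1} =>
      infDist (x : Y) (LinearMap.range (ζ : X →ₗ[ℝ] Y))) :=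
    ⟨0, Set.forall_mem_range.2 fun _ => infDist_nonneg⟩
  have := hE
  exact Submodule.sup_eq_top_of_infDist_le hcompl E' hlt
    ((Real.iSup_nonneg fun _ => infDist_nonneg).trans_lt hlt)
    (fun x hx hx1 => le_ciSup hbdd ⟨x, hx, hx1⟩) (fun x hx hx1 => ciInf_le hbdd' ⟨x, hx, hx1⟩)

/-- **Explicit-constant form of Lemma 3.6.** If
`sup_{x ∈ E, ‖x‖ = 1} dist(x, E') < inf_{x ∈ E, ‖x‖ = 1} dist(x, range ζ)`,
then `Y = range ζ + E'`. -/
theorem stmt_1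
    {X Y : Type*} [NormedAddCommGroup X] [NormedSpace ℝ X] [CompleteSpace X]
    [NormedAddCommGroup Y] [NormedSpace ℝ Y] [CompleteSpace Y]
    (ζ : X →L[ℝ] Y)
    (hclosed : IsClosed (LinearMap.range (ζ : X →ₗ[ℝ] Y) : Set Y))
    (E : Submodule ℝ Y) (hE : FiniteDimensional ℝ E)
    (hsum : LinearMap.range (ζ : X →ₗ[ℝ] Y) ⊔ E = ⊤)
    (hint : LinearMap.range (ζ : X →ₗ[ℝ] Y) ⊓ E = ⊥)
    (E' : Submodule ℝ Y) (hE' : FiniteDimensional ℝ E')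
    (hlt : (⨆ x : {x : Y // x ∈ E ∧ ‖x‖ = 1}, Metric.infDist (x : Y) (E' : Set Y)) <
      ⨅ x : {x : Y // x ∈ E ∧ ‖x‖ = 1},
        Metric.infDist (x : Y) (LinearMap.range (ζ : X →ₗ[ℝ] Y) : Set Y)) :
    LinearMap.range (ζ : X →ₗ[ℝ] Y) ⊔ E' = ⊤ :=
  stmt_1_general ζ E hE hsum hint E' hlt
end

section
/- Let X and Y be real Banach spaces and let ζ : X → Y be a Fredholm operator (a continuous linear map with finite-dimensional kernel and closed range of finite codimension). Let E be a finite-dimensional subspace of Y such that Y = range(ζ) + E (the intersection range(ζ) ∩ E need not be trivial). Then there exists a constant c > 0 (depending on E and ζ) such that for every finite-dimensional subspace E' of Y with sup over the unit sphere of E of dist(x, E') ≤ c, one has Y = range(ζ) + E'. -/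
/-!
Let `π : Y → Y ⧸ range ζ`. Since `π` maps the finite-dimensional space `E` onto the quotient, the
open mapping theorem lets every `y` be written as `r + x` with `r ∈ range ζ`, `x ∈ E` and
`‖x‖ ≤ K ‖y‖`. If `range ζ + E'` were a proper subspace, it would be closed, and Riesz's lemma
would give `y` at distance at least `‖y‖ / 2` from it; but this distance equals that of the
`E`-component `x`, which is at most `c ‖x‖ ≤ c K ‖y‖`. Hence `c = 1 / (4K)` works.
-/

open Metric Pointwise

theorem Submodule.exists_forall_mem_sub_mem_norm_le {𝕜 Y : Type*} [NontriviallyNormedField 𝕜]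
    [CompleteSpace 𝕜] [NormedAddCommGroup Y] [NormedSpace 𝕜 Y] {R E : Submodule 𝕜 Y}
    (hR : IsClosed (R : Set Y)) [FiniteDimensional 𝕜 E] (hRE : R ⊔ E = ⊤) :
    ∃ K > 0, ∀ y : Y, ∃ x ∈ E, y - x ∈ R ∧ ‖x‖ ≤ K * ‖y‖ := by
  have : IsClosed (R : Set Y) := hR
  have hsurj : Function.Surjective (R.mkQ ∘ₗ E.subtype) := by
    rwa [← LinearMap.range_eq_top, LinearMap.range_comp, Submodule.range_subtype,
      Submodule.map_mkQ_eq_top]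
  have : FiniteDimensional 𝕜 (Y ⧸ R) := Module.Finite.of_surjective _ hsurj
  have : CompleteSpace E := FiniteDimensional.complete 𝕜 E
  have : CompleteSpace (Y ⧸ R) := FiniteDimensional.complete 𝕜 (Y ⧸ R)
  let π : E →L[𝕜] Y ⧸ R := R.mkQL.comp E.subtypeL
  have hπ : Function.Surjective π := hsurj
  obtain ⟨K, hK, hlift⟩ := π.exists_preimage_norm_le hπ
  refine ⟨K, hK, fun y => ?_⟩
  obtain ⟨x, hxy, hxK⟩ := hlift (R.mkQ y)
  refine ⟨x, x.2, (Submodule.Quotient.eq R).mp hxy.symm, hxK.trans ?_⟩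
  gcongr
  exact Submodule.Quotient.norm_mk_le R y

section Real

variable {Y : Type*} [NormedAddCommGroup Y] [NormedSpace ℝ Y]

theorem Submodule.infDist_le_mul_norm_of_forall_norm_eq_one {E F : Submodule ℝ Y} {c : ℝ}
    (hEF : ∀ x ∈ E, ‖x‖ = 1 → infDist x F ≤ c) {x : Y} (hx : x ∈ E) :
    infDist x F ≤ c * ‖x‖ := by
  rcases eq_or_ne x 0 with rfl | hx0
  · simp [infDist_zero_of_mem F.zero_mem]
  have hnorm : ‖x‖ ≠ 0 := norm_ne_zero_iff.mpr hx0
  have hF : ‖x‖ • (F : Set Y) = F := by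
    ext y
    rw [Set.mem_smul_set_iff_inv_smul_mem₀ hnorm, SetLike.mem_coe, SetLike.mem_coe,
      F.smul_mem_iff (inv_ne_zero hnorm)]
  have hunit : ‖‖x‖⁻¹ • x‖ = 1 := by
    rw [norm_smul, norm_inv, norm_norm, inv_mul_cancel₀ hnorm]
  calc infDist x F = infDist (‖x‖ • ‖x‖⁻¹ • x) (‖x‖ • (F : Set Y)) := by
        rw [hF, smul_inv_smul₀ hnorm]
    _ = ‖x‖ * infDist (‖x‖⁻¹ • x) F := by rw [infDist_smul₀ hnorm, norm_norm]
    _ ≤ ‖x‖ * c := by gcongr; exact hEF _ (E.smul_mem _ hx) hunit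
    _ = c * ‖x‖ := mul_comm _ _

theorem Submodule.exists_pos_forall_eq_top_of_infDist_le {R E : Submodule ℝ Y}
    (hR : IsClosed (R : Set Y)) [FiniteDimensional ℝ E] (hRE : R ⊔ E = ⊤) :
    ∃ c > 0, ∀ F : Submodule ℝ Y, IsClosed (F : Set Y) → R ≤ F →
      (∀ x ∈ E, ‖x‖ = 1 → infDist x F ≤ c) → F = ⊤ := by
  obtain ⟨K, hK, hlift⟩ := exists_forall_mem_sub_mem_norm_le hR hRE
  refine ⟨(4 * K)⁻¹, by positivity, fun F hF hRF hEF => ?_⟩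
  rw [Submodule.eq_top_iff']
  by_contra! hne
  obtain ⟨y, hyF, hy⟩ := riesz_lemma hF hne (r := 1 / 2) (by norm_num)
  obtain ⟨x, hxE, hyx, hxK⟩ := hlift y
  have hfar : ‖y‖ / 2 ≤ infDist x F := by
    refine (le_infDist ⟨0, F.zero_mem⟩).mpr fun z hz => ?_
    have hmem : y - x + z ∈ F := F.add_mem (hRF hyx) hz
    calc ‖y‖ / 2 = 1 / 2 * ‖y‖ := by ring
      _ ≤ ‖y - (y - x + z)‖ := hy _ hmem
      _ = dist x z := by rw [dist_eq_norm]; congr 1; abel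
  have hnear : infDist x F ≤ ‖y‖ / 4 :=
    calc infDist x F ≤ (4 * K)⁻¹ * ‖x‖ := infDist_le_mul_norm_of_forall_norm_eq_one hEF hxE
      _ ≤ (4 * K)⁻¹ * (K * ‖y‖) := by gcongr
      _ = ‖y‖ / 4 := by field_simp
  have hy0 : y = 0 := norm_le_zero_iff.mp (by linarith)
  exact hyF (hy0 ▸ F.zero_mem)

end Real

theorem stmt_2_general
    {X Y : Type*} [NormedAddCommGroup X] [NormedSpace ℝ X]
    [NormedAddCommGroup Y] [NormedSpace ℝ Y]
    (ζ : X →L[ℝ] Y)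
    (hclosed : IsClosed (LinearMap.range (ζ : X →ₗ[ℝ] Y) : Set Y))
    (E : Submodule ℝ Y) (hE : FiniteDimensional ℝ E)
    (hsum : LinearMap.range (ζ : X →ₗ[ℝ] Y) ⊔ E = ⊤) :
    ∃ c > 0, ∀ E' : Submodule ℝ Y, FiniteDimensional ℝ E' →
      (∀ x ∈ E, ‖x‖ = 1 → Metric.infDist x (E' : Set Y) ≤ c) →
      LinearMap.range (ζ : X →ₗ[ℝ] Y) ⊔ E' = ⊤ := by
  obtain ⟨c, hc, hcE⟩ := Submodule.exists_pos_forall_eq_top_of_infDist_le hclosed hsum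
  refine ⟨c, hc, fun E' hE' hdist => hcE _ ?_ le_sup_left fun x hx hx1 => ?_⟩
  · exact Submodule.isClosed_sup_finiteDimensional _ E' hclosed
  · exact (infDist_le_infDist_of_subset (SetLike.coe_mono le_sup_right) ⟨0, E'.zero_mem⟩).trans
      (hdist x hx hx1)

/-- **Corollary 3.3.** Same as Lemma 3.6, but without assuming
`range ζ ∩ E = {0}`. -/
theorem stmt_2
    {X Y : Type*} [NormedAddCommGroup X] [NormedSpace ℝ X] [CompleteSpace X]
    [NormedAddCommGroup Y] [NormedSpace ℝ Y] [CompleteSpace Y]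
    (ζ : X →L[ℝ] Y)
    (hker : FiniteDimensional ℝ (LinearMap.ker (ζ : X →ₗ[ℝ] Y)))
    (hclosed : IsClosed (LinearMap.range (ζ : X →ₗ[ℝ] Y) : Set Y))
    (hcoker : FiniteDimensional ℝ (Y ⧸ LinearMap.range (ζ : X →ₗ[ℝ] Y)))
    (E : Submodule ℝ Y) (hE : FiniteDimensional ℝ E)
    (hsum : LinearMap.range (ζ : X →ₗ[ℝ] Y) ⊔ E = ⊤) :
    ∃ c > 0, ∀ E' : Submodule ℝ Y, FiniteDimensional ℝ E' →
      (∀ x ∈ E, ‖x‖ = 1 → Metric.infDist x (E' : Set Y) ≤ c) →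
      LinearMap.range (ζ : X →ₗ[ℝ] Y) ⊔ E' = ⊤ :=
  stmt_2_general ζ hclosed E hE hsum
end

section
/- Let Y be a real Banach space, let L be a closed linear subspace of Y, and let E be a finite-dimensional linear subspace of Y with Y = L + E. For each ε > 0 let T_ε : E → Y be a linear map, and suppose that sup_{x ∈ E, ‖x‖ = 1} ‖T_ε x − x‖ tends to 0 as ε tends to 0 from above. Then there exists ε₀ > 0 such that for all 0 < ε < ε₀ one has Y = L + T_ε(E). -/
/-!
Pass to the quotient `V = Y ⧸ L`, which is finite dimensional because `E` maps onto it, and is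
a normed space because `L` is closed. Then `L ⊔ range f = ⊤` says exactly that `E → V` induced
by `f` is surjective, i.e. has rank at least `dim V`; in finite dimensions this is an open
condition on `f` in operator norm. The hypothesis says `T ε → E.subtype` in operator norm, and
`E.subtype` satisfies the condition because `L ⊔ E = ⊤`.
-/

open Filter Topology Module

theorem LinearMap.range_eq_top_iff_finrank_le_rank {K V W : Type*} [DivisionRing K]
    [AddCommGroup V] [Module K V] [AddCommGroup W] [Module K W] [FiniteDimensional K W]
    (f : V →ₗ[K] W) : range f = ⊤ ↔ (finrank K W : Cardinal) ≤ f.rank := by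
  rw [LinearMap.rank, ← finrank_eq_rank, Nat.cast_le, Submodule.eq_top_iff_finrank_eq]
  exact ⟨ge_of_eq, (Submodule.finrank_le _).antisymm⟩

theorem ContinuousLinearMap.iSup_norm_apply_eq_opNorm {E F : Type*} [NormedAddCommGroup E]
    [NormedSpace ℝ E] [SeminormedAddCommGroup F] [NormedSpace ℝ F] (f : E →L[ℝ] F) :
    ⨆ x : {x : E // ‖x‖ = 1}, ‖f x‖ = ‖f‖ := by
  rw [← f.sSup_sphere_eq_norm, sSup_image']
  exact Equiv.iSup_congr (Equiv.subtypeEquivRight fun x => mem_sphere_zero_iff_norm.symm)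
    fun _ => rfl

theorem isOpen_setOf_sup_range_eq_top {𝕜 E Y : Type*} [NontriviallyNormedField 𝕜]
    [CompleteSpace 𝕜] [NormedAddCommGroup E] [NormedSpace 𝕜 E] [NormedAddCommGroup Y]
    [NormedSpace 𝕜 Y] (L : Submodule 𝕜 Y) [IsClosed (L : Set Y)]
    [FiniteDimensional 𝕜 (Y ⧸ L)] :
    IsOpen {f : E →L[𝕜] Y | L ⊔ LinearMap.range (f : E →ₗ[𝕜] Y) = ⊤} := by
  have hset : {f : E →L[𝕜] Y | L ⊔ LinearMap.range (f : E →ₗ[𝕜] Y) = ⊤} =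
      (L.mkQL ∘L ·) ⁻¹' {g | (finrank 𝕜 (Y ⧸ L) : Cardinal) ≤ (g : E →ₗ[𝕜] Y ⧸ L).rank} := by
    ext f
    change L ⊔ LinearMap.range (f : E →ₗ[𝕜] Y) = ⊤ ↔
      (finrank 𝕜 (Y ⧸ L) : Cardinal) ≤ (L.mkQ ∘ₗ (f : E →ₗ[𝕜] Y)).rank
    rw [← LinearMap.range_eq_top_iff_finrank_le_rank, LinearMap.range_comp,
      Submodule.map_mkQ_eq_top]
  rw [hset]
  exact (isOpen_setOfPred_nat_le_rank _).preimage (by fun_prop)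

theorem tendsto_toContinuousLinearMap_of_iSup_norm_sub {α E Y : Type*} {l : Filter α}
    [NormedAddCommGroup E] [NormedSpace ℝ E] [FiniteDimensional ℝ E]
    [NormedAddCommGroup Y] [NormedSpace ℝ Y] {T : α → E →ₗ[ℝ] Y} {T₀ : E →ₗ[ℝ] Y}
    (hT : Tendsto (fun a => ⨆ x : {x : E // ‖x‖ = 1}, ‖T a x - T₀ x‖) l (𝓝 0)) :
    Tendsto (fun a => (T a).toContinuousLinearMap) l (𝓝 T₀.toContinuousLinearMap) := by
  rw [tendsto_iff_norm_sub_tendsto_zero]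
  simpa only [← map_sub, ← ContinuousLinearMap.iSup_norm_apply_eq_opNorm,
    LinearMap.coe_toContinuousLinearMap', LinearMap.sub_apply] using hT

theorem stmt_5_general
    {Y : Type*} [NormedAddCommGroup Y] [NormedSpace ℝ Y]
    (L : Submodule ℝ Y) (hL : IsClosed (L : Set Y))
    (E : Submodule ℝ Y) (hE : FiniteDimensional ℝ E)
    (hsum : L ⊔ E = ⊤)
    (T : ℝ → (E →ₗ[ℝ] Y))
    (hT : Filter.Tendsto (fun ε => ⨆ x : {x : E // ‖x‖ = 1}, ‖T ε x - (x : Y)‖)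
      (nhdsWithin 0 (Set.Ioi 0)) (nhds 0)) :
    ∃ ε₀ > 0, ∀ ε : ℝ, 0 < ε → ε < ε₀ → L ⊔ LinearMap.range (T ε) = ⊤ := by
  have : IsClosed (L : Set Y) := hL
  have : FiniteDimensional ℝ (Y ⧸ L) :=
    Module.Finite.of_surjective (L.mkQ ∘ₗ E.subtype) <| by
      rw [← LinearMap.range_eq_top, LinearMap.range_comp, Submodule.range_subtype,
        Submodule.map_mkQ_eq_top, hsum]
  have hconv := tendsto_toContinuousLinearMap_of_iSup_norm_sub (T₀ := E.subtype) hT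
  have hsurj : ∀ᶠ ε in 𝓝[>] 0, L ⊔ LinearMap.range (T ε) = ⊤ := by
    have := hconv.eventually ((isOpen_setOf_sup_range_eq_top L).mem_nhds ?_)
    · simpa only [Set.mem_ofPred_eq, LinearMap.coe_toContinuousLinearMap] using this
    · simpa only [Set.mem_ofPred_eq, LinearMap.coe_toContinuousLinearMap, Submodule.range_subtype]
  obtain ⟨ε₀, hε₀, hsub⟩ := mem_nhdsGT_iff_exists_Ioo_subset.mp hsurj
  exact ⟨ε₀, hε₀, fun ε hε hεε₀ => hsub ⟨hε, hεε₀⟩⟩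

/-- **Abstract mechanism behind Lemma 3.7.** If `Y = L + E` with `L` closed and `E`
finite dimensional, and `T_ε : E → Y` are linear maps with
`sup_{x ∈ E, ‖x‖ = 1} ‖T_ε x - x‖ → 0` as `ε → 0⁺`, then for all sufficiently small
`ε > 0` one has `Y = L + T_ε(E)`. -/
theorem stmt_5
    {Y : Type*} [NormedAddCommGroup Y] [NormedSpace ℝ Y] [CompleteSpace Y]
    (L : Submodule ℝ Y) (hL : IsClosed (L : Set Y))
    (E : Submodule ℝ Y) (hE : FiniteDimensional ℝ E)
    (hsum : L ⊔ E = ⊤)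
    (T : ℝ → (E →ₗ[ℝ] Y))
    (hT : Filter.Tendsto (fun ε => ⨆ x : {x : E // ‖x‖ = 1}, ‖T ε x - (x : Y)‖)
      (nhdsWithin 0 (Set.Ioi 0)) (nhds 0)) :
    ∃ ε₀ > 0, ∀ ε : ℝ, 0 < ε → ε < ε₀ → L ⊔ LinearMap.range (T ε) = ⊤ :=
  stmt_5_general L hL E hE hsum T hT
end
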